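/- Let d ≥ 1, α ∈ (0,2), let ℓ:(0,2)→(0,∞) be measurable, slowly varying at 0, and bounded away from 0 and ∞ on every compact subinterval of (0,2), let η ∈ ℝ^d with |η| = 1 and θ ∈ (0, π/2]. Then there exists a constant c > 0 such that for every r ∈ (0, 1/4): ∫_{{h : 2r ≤ |h| ≤ 1 and |⟨h,η⟩| ≥ cos θ · |h|}} ℓ(|h|) |h|^{-d-α} dh ≥ c · ℓ(r)/r^α. -/

import Mathlib

/-!
For small `r` only the shell `2r ≤ ‖h‖ ≤ 4r` of the cone is used. There
`‖h‖ ^ (-d-α) ≥ (4r) ^ (-d-α)`, and rescaling by `r` turns `∫ ℓ ‖h‖` over the shell into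
`r ^ d ∫ ℓ (‖u‖ r)` over the fixed shell `2 ≤ ‖u‖ ≤ 4`, whose measure `V` is positive. Since
`ℓ (‖u‖ r) / ℓ r → 1` pointwise, Fatou's lemma gives `∫ ℓ (‖u‖ r) ≥ c₀ ℓ r` for any `c₀ < V` and
all small `r`; no uniform convergence theorem for slowly varying functions is needed. For `r`
bounded away from `0`, `ℓ r / r ^ α` is bounded above while the integral is at least the positive
integral over the fixed shell `1/2 ≤ ‖h‖ ≤ 1`.
-/

open MeasureTheory Topology Filter Set Module
open scoped ENNReal RealInnerProductSpace

def SlowlyVaryingAtZero (ℓ : ℝ → ℝ) : Prop :=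
  ∀ lam : ℝ, 0 < lam → Tendsto (fun r => ℓ (lam * r) / ℓ r) (𝓝[>] (0:ℝ)) (𝓝 1)

theorem SlowlyVaryingAtZero.eventually_ofReal_mul_le_setLIntegral {X : Type*}
    [MeasurableSpace X] {μ : Measure X} {ℓ : ℝ → ℝ} (hsv : SlowlyVaryingAtZero ℓ)
    (hℓ : Measurable ℓ) {g : X → ℝ} (hg : Measurable g) {A : Set X} (hA : MeasurableSet A)
    (hgA : ∀ x ∈ A, 0 < g x) {c : ℝ≥0∞} (hc : c < μ A) :
    ∀ᶠ r in 𝓝[>] (0:ℝ),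
      ENNReal.ofReal (ℓ r) * c ≤ ∫⁻ x in A, ENNReal.ofReal (ℓ (g x * r)) ∂μ := by
  set ratio : ℝ → X → ℝ≥0∞ := fun r x => ENNReal.ofReal (ℓ (g x * r) / ℓ r)
  have hratio_meas : ∀ r, Measurable (ratio r) := fun r =>
    ((hℓ.comp (hg.mul_const r)).div_const _).ennreal_ofReal
  have hlim : ∀ x ∈ A, Tendsto (ratio · x) (𝓝[>] 0) (𝓝 1) := fun x hx => by
    simpa using ENNReal.tendsto_ofReal (hsv _ (hgA x hx))
  have hfatou : μ A ≤ liminf (fun r => ∫⁻ x in A, ratio r x ∂μ) (𝓝[>] 0) :=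
    calc μ A = ∫⁻ x in A, liminf (ratio · x) (𝓝[>] 0) ∂μ := by
          rw [setLIntegral_congr_fun hA fun x hx => (hlim x hx).liminf_eq, setLIntegral_const,
            one_mul]
      _ ≤ _ := lintegral_liminf_le hratio_meas
  filter_upwards [eventually_lt_of_lt_liminf (hc.trans_le hfatou)] with r hr
  rcases le_or_gt (ℓ r) 0 with hℓr | hℓr
  · simp [ENNReal.ofReal_of_nonpos hℓr]
  calc ENNReal.ofReal (ℓ r) * c ≤ ENNReal.ofReal (ℓ r) * ∫⁻ x in A, ratio r x ∂μ :=
        mul_le_mul_right hr.le _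
    _ = ∫⁻ x in A, ENNReal.ofReal (ℓ (g x * r)) ∂μ := by
        rw [← lintegral_const_mul _ (hratio_meas r)]
        refine lintegral_congr fun x => ?_
        rw [← ENNReal.ofReal_mul hℓr.le, mul_div_cancel₀ _ hℓr.ne']

theorem exists_pos_mul_le_of_eventually_nhdsGT {g G : ℝ → ℝ} {b c m : ℝ} (hc : 0 < c)
    (hev : ∀ᶠ r in 𝓝[>] 0, c * g r ≤ G r) (hm : 0 < m) (hG : ∀ r ∈ Ioo 0 b, m ≤ G r)
    (hg : ∀ a > 0, ∃ M, ∀ r ∈ Icc a b, g r ≤ M) :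
    ∃ c' > 0, ∀ r ∈ Ioo 0 b, c' * g r ≤ G r := by
  obtain ⟨ε, hε, hεG⟩ := (nhdsGT_basis (0:ℝ)).eventually_iff.1 hev
  obtain ⟨M, hM⟩ := hg (ε / 2) (by linarith)
  have hM₁ : 0 < max M 1 := lt_max_of_lt_right one_pos
  refine ⟨min c (m / max M 1), lt_min hc (div_pos hm hM₁), fun r hr => ?_⟩
  rcases le_or_gt (g r) 0 with hg0 | hg0
  · exact (mul_nonpos_of_nonneg_of_nonpos (lt_min hc (div_pos hm hM₁)).le hg0).trans
      (hm.le.trans (hG r hr))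
  rcases lt_or_ge r (ε / 2) with hrε | hrε
  · calc min c (m / max M 1) * g r ≤ c * g r :=
          mul_le_mul_of_nonneg_right (min_le_left _ _) hg0.le
      _ ≤ G r := hεG ⟨hr.1, by linarith⟩
  · calc min c (m / max M 1) * g r ≤ m / max M 1 * max M 1 :=
          mul_le_mul (min_le_right _ _) ((hM r ⟨hrε, hr.2.le⟩).trans (le_max_left _ _)) hg0.le
            (div_pos hm hM₁).le
      _ = m := div_mul_cancel₀ _ hM₁.ne'
      _ ≤ G r := hG r hr

theorem le_setIntegral_of_ofReal_le_setLIntegral {X : Type*} [MeasurableSpace X]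
    {μ : Measure X} {f : X → ℝ} {s : Set X} (hf : IntegrableOn f s μ)
    (hf0 : 0 ≤ᵐ[μ.restrict s] f) {x : ℝ}
    (hx : ENNReal.ofReal x ≤ ∫⁻ y in s, ENNReal.ofReal (f y) ∂μ) : x ≤ ∫ y in s, f y ∂μ := by
  rw [← ofReal_integral_eq_lintegral_ofReal hf hf0, ENNReal.ofReal_le_ofReal_iff'] at hx
  exact hx.elim id fun hx0 => hx0.trans (integral_nonneg_of_ae hf0)

theorem Measure.setLIntegral_eq_mul_setLIntegral_comp_smul {E : Type*} [NormedAddCommGroup E]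
    [NormedSpace ℝ E] [MeasurableSpace E] [BorelSpace E] [FiniteDimensional ℝ E]
    (μ : Measure E) [μ.IsAddHaarMeasure] {F : E → ℝ≥0∞} (hF : Measurable F) {t : Set E}
    (ht : MeasurableSet t) {r : ℝ} (hr : 0 < r) :
    ∫⁻ x in t, F x ∂μ =
      ENNReal.ofReal (r ^ finrank ℝ E) * ∫⁻ x in (r • ·) ⁻¹' t, F (r • x) ∂μ := by
  rw [← setLIntegral_map ht hF (measurable_const_smul r), Measure.map_addHaar_smul μ hr.ne',
    Measure.restrict_smul, lintegral_smul_measure, smul_eq_mul, ← mul_assoc,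
    ← ENNReal.ofReal_mul (by positivity), abs_of_pos (by positivity),
    mul_inv_cancel₀ (by positivity), ENNReal.ofReal_one, one_mul]

section ConeAnnulus

variable {E : Type*} [NormedAddCommGroup E] [InnerProductSpace ℝ E]

def coneAnnulus (η : E) (θ a b : ℝ) : Set E :=
  {h | a ≤ ‖h‖ ∧ ‖h‖ ≤ b ∧ Real.cos θ * ‖h‖ ≤ |⟪h, η⟫|}

theorem coneAnnulus_mono {η : E} {θ a a' b b' : ℝ} (ha : a' ≤ a) (hb : b ≤ b') :
    coneAnnulus η θ a b ⊆ coneAnnulus η θ a' b' :=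
  fun _ ⟨h₁, h₂, h₃⟩ => ⟨ha.trans h₁, h₂.trans hb, h₃⟩

theorem isClosed_coneAnnulus (η : E) (θ a b : ℝ) : IsClosed (coneAnnulus η θ a b) :=
  (isClosed_le continuous_const continuous_norm).inter <|
    (isClosed_le continuous_norm continuous_const).inter <|
      isClosed_le (continuous_const.mul continuous_norm)
        (continuous_id.inner continuous_const).abs

theorem measurableSet_coneAnnulus [MeasurableSpace E] [OpensMeasurableSpace E] (η : E)
    (θ a b : ℝ) : MeasurableSet (coneAnnulus η θ a b) :=
  (isClosed_coneAnnulus η θ a b).measurableSet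

theorem preimage_smul_coneAnnulus (η : E) (θ a b : ℝ) {r : ℝ} (hr : 0 < r) :
    (r • ·) ⁻¹' coneAnnulus η θ (r * a) (r * b) = coneAnnulus η θ a b := by
  ext h
  simp only [coneAnnulus, mem_preimage, mem_ofPred_eq, norm_smul, Real.norm_of_nonneg hr.le,
    real_inner_smul_left, abs_mul, abs_of_pos hr, mul_left_comm (Real.cos θ)]
  rw [mul_le_mul_iff_right₀ hr, mul_le_mul_iff_right₀ hr, mul_le_mul_iff_right₀ hr]

theorem measure_coneAnnulus_pos [MeasurableSpace E] (μ : Measure E) [μ.IsOpenPosMeasure]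
    {η : E} (hη : ‖η‖ = 1) {θ : ℝ} (hθ : Real.cos θ < 1) {a b : ℝ} (ha : 0 ≤ a) (hab : a < b) :
    0 < μ (coneAnnulus η θ a b) := by
  set U : Set E := {h | a < ‖h‖ ∧ ‖h‖ < b ∧ Real.cos θ * ‖h‖ < |⟪h, η⟫|}
  have hU : IsOpen U :=
    (isOpen_lt continuous_const continuous_norm).inter <|
      (isOpen_lt continuous_norm continuous_const).inter <|
        isOpen_lt (continuous_const.mul continuous_norm)
          (continuous_id.inner continuous_const).abs
  have hmid : 0 < (a + b) / 2 := by linarith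
  have hmem : ((a + b) / 2) • η ∈ U := by
    simp only [U, mem_ofPred_eq, norm_smul, hη, real_inner_smul_left,
      real_inner_self_eq_norm_sq, Real.norm_of_nonneg hmid.le, mul_one, one_pow, abs_of_pos hmid]
    exact ⟨by linarith, by linarith, by nlinarith⟩
  exact (hU.measure_pos μ ⟨_, hmem⟩).trans_le
    (measure_mono fun h hh => ⟨hh.1.le, hh.2.1.le, hh.2.2.le⟩)

variable [MeasurableSpace E] [BorelSpace E]

theorem integrableOn_comp_norm_coneAnnulus [ProperSpace E] (μ : Measure E)
    [IsFiniteMeasureOnCompacts μ] {F : ℝ → ℝ} (hF : Measurable F) {η : E} {θ a b M : ℝ}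
    (hM : ∀ t ∈ Icc a b, |F t| ≤ M) :
    IntegrableOn (fun h => F ‖h‖) (coneAnnulus η θ a b) μ :=
  Measure.integrableOn_of_bounded
    ((measure_mono fun _ hh => mem_closedBall_zero_iff.2 hh.2.1).trans_lt
      measure_closedBall_lt_top).ne
    (hF.comp measurable_norm).aestronglyMeasurable
    ((ae_restrict_iff' (measurableSet_coneAnnulus η θ a b)).2
      (ae_of_all _ fun _ hh => hM _ ⟨hh.1, hh.2.1⟩))

theorem setLIntegral_coneAnnulus_pos (μ : Measure E) [μ.IsOpenPosMeasure] {F : ℝ → ℝ}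
    (hF : Measurable F) {η : E} (hη : ‖η‖ = 1) {θ : ℝ} (hθ : Real.cos θ < 1) {a b : ℝ}
    (ha : 0 ≤ a) (hab : a < b) (hFpos : ∀ t ∈ Icc a b, 0 < F t) :
    0 < ∫⁻ h in coneAnnulus η θ a b, ENNReal.ofReal (F ‖h‖) ∂μ := by
  rw [setLIntegral_pos_iff (f := fun h => ENNReal.ofReal (F ‖h‖))
    (hF.comp measurable_norm).ennreal_ofReal]
  exact (measure_coneAnnulus_pos μ hη hθ ha hab).trans_le <| measure_mono fun h hh =>
    ⟨ENNReal.ofReal_pos.2 (hFpos _ ⟨hh.1, hh.2.1⟩) |>.ne', hh⟩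

theorem le_setIntegral_coneAnnulus_of_ofReal_le [ProperSpace E] (μ : Measure E)
    [IsFiniteMeasureOnCompacts μ] {ℓ : ℝ → ℝ} (hℓ : Measurable ℓ) {η : E} {θ a b p m M x : ℝ}
    (hp : p ≤ 0) (ha : 0 < a) (hm : 0 < m) (hℓab : ∀ t ∈ Icc a b, m ≤ ℓ t ∧ ℓ t ≤ M)
    (hx : ENNReal.ofReal x ≤
      ∫⁻ h in coneAnnulus η θ a b, ENNReal.ofReal (ℓ ‖h‖ * ‖h‖ ^ p) ∂μ) :
    x ≤ ∫ h in coneAnnulus η θ a b, ℓ ‖h‖ * ‖h‖ ^ p ∂μ := by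
  have hℓpos : ∀ t ∈ Icc a b, 0 < ℓ t := fun t ht => hm.trans_le (hℓab t ht).1
  refine le_setIntegral_of_ofReal_le_setLIntegral ?_ ?_ hx
  · refine integrableOn_comp_norm_coneAnnulus μ (F := fun t => ℓ t * t ^ p) (by fun_prop)
      (M := M * a ^ p) fun t ht => ?_
    have ht0 : 0 < t := ha.trans_le ht.1
    rw [abs_of_pos (mul_pos (hℓpos t ht) (Real.rpow_pos_of_pos ht0 _))]
    exact mul_le_mul (hℓab t ht).2 (Real.rpow_le_rpow_of_nonpos ha ht.1 hp) (by positivity)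
      ((hℓpos t ht).le.trans (hℓab t ht).2)
  · refine (ae_restrict_iff' (measurableSet_coneAnnulus η θ a b)).2 <|
      ae_of_all _ fun _ hh => mul_nonneg (hℓpos _ ⟨hh.1, hh.2.1⟩).le (by positivity)

variable [FiniteDimensional ℝ E] (μ : Measure E) [μ.IsAddHaarMeasure]

theorem ofReal_mul_setLIntegral_le_setLIntegral_coneAnnulus {ℓ : ℝ → ℝ} (hℓ : Measurable ℓ)
    (η : E) (θ : ℝ) {a b p r : ℝ} (ha : 0 < a) (hp : p ≤ 0) (hr : 0 < r) :
    ENNReal.ofReal ((r * b) ^ p * r ^ finrank ℝ E) *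
        ∫⁻ u in coneAnnulus η θ a b, ENNReal.ofReal (ℓ (‖u‖ * r)) ∂μ ≤
      ∫⁻ h in coneAnnulus η θ (r * a) (r * b), ENNReal.ofReal (ℓ ‖h‖ * ‖h‖ ^ p) ∂μ := by
  have hℓn : Measurable fun h : E => ENNReal.ofReal (ℓ ‖h‖) :=
    (hℓ.comp measurable_norm).ennreal_ofReal
  calc ENNReal.ofReal ((r * b) ^ p * r ^ finrank ℝ E) *
        ∫⁻ u in coneAnnulus η θ a b, ENNReal.ofReal (ℓ (‖u‖ * r)) ∂μ
      = ENNReal.ofReal ((r * b) ^ p) *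
          ∫⁻ h in coneAnnulus η θ (r * a) (r * b), ENNReal.ofReal (ℓ ‖h‖) ∂μ := by
        rw [Measure.setLIntegral_eq_mul_setLIntegral_comp_smul μ hℓn
            (measurableSet_coneAnnulus η θ _ _) hr, preimage_smul_coneAnnulus η θ a b hr,
          ENNReal.ofReal_mul' (by positivity), mul_assoc]
        simp only [norm_smul, Real.norm_of_nonneg hr.le, mul_comm r]
    _ = ∫⁻ h in coneAnnulus η θ (r * a) (r * b),
          ENNReal.ofReal (ℓ ‖h‖) * ENNReal.ofReal ((r * b) ^ p) ∂μ := by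
        rw [← lintegral_const_mul _ hℓn]
        simp only [mul_comm]
    _ ≤ _ := setLIntegral_mono' (measurableSet_coneAnnulus η θ _ _) fun h hh => by
        have hh0 : 0 < ‖h‖ := (mul_pos hr ha).trans_le hh.1
        rw [ENNReal.ofReal_mul' (Real.rpow_nonneg hh0.le p)]
        exact mul_le_mul_right
          (ENNReal.ofReal_le_ofReal (Real.rpow_le_rpow_of_nonpos hh0 hh.2.1 hp)) _

theorem SlowlyVaryingAtZero.exists_eventually_le_setLIntegral_coneAnnulus {ℓ : ℝ → ℝ}
    (hsv : SlowlyVaryingAtZero ℓ) (hℓ : Measurable ℓ) {η : E} (hη : ‖η‖ = 1) {θ : ℝ}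
    (hθ : Real.cos θ < 1) {α : ℝ} (hα : 0 ≤ α) :
    ∃ c > 0, ∀ᶠ r in 𝓝[>] (0:ℝ), ENNReal.ofReal (c * (ℓ r / r ^ α)) ≤
      ∫⁻ h in coneAnnulus η θ (2 * r) 1,
        ENNReal.ofReal (ℓ ‖h‖ * ‖h‖ ^ (-(finrank ℝ E : ℝ) - α)) ∂μ := by
  set p : ℝ := -(finrank ℝ E : ℝ) - α
  have hp : p ≤ 0 := by simp only [p]; linarith [(finrank ℝ E).cast_nonneg (α := ℝ)]
  obtain ⟨c₀, hc₀, hc₀pos, hc₀V⟩ := ENNReal.lt_iff_exists_real_btwn.1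
    (measure_coneAnnulus_pos μ hη hθ zero_le_two (by norm_num : (2:ℝ) < 4))
  refine ⟨4 ^ p * c₀, mul_pos (by positivity) (ENNReal.ofReal_pos.1 hc₀pos), ?_⟩
  filter_upwards [hsv.eventually_ofReal_mul_le_setLIntegral hℓ measurable_norm
      (measurableSet_coneAnnulus η θ 2 4) (fun u hu => zero_lt_two.trans_le hu.1) hc₀V,
    Ioo_mem_nhdsGT (by norm_num : (0:ℝ) < 1 / 4)] with r hsmall hr
  have hr0 : 0 < r := hr.1
  have hscale : r ^ p * r ^ (finrank ℝ E : ℝ) = (r ^ α)⁻¹ := by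
    rw [← Real.rpow_add hr0, ← Real.rpow_neg hr0.le]
    congr 1
    simp only [p]
    ring
  calc ENNReal.ofReal (4 ^ p * c₀ * (ℓ r / r ^ α))
      = ENNReal.ofReal ((r * 4) ^ p * r ^ finrank ℝ E) *
          (ENNReal.ofReal (ℓ r) * ENNReal.ofReal c₀) := by
        rw [← ENNReal.ofReal_mul' hc₀, ← ENNReal.ofReal_mul (by positivity),
          Real.mul_rpow hr0.le zero_le_four, ← Real.rpow_natCast]
        congr 1
        linear_combination (-(4 ^ p * c₀ * ℓ r)) * hscale
    _ ≤ ENNReal.ofReal ((r * 4) ^ p * r ^ finrank ℝ E) *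
          ∫⁻ u in coneAnnulus η θ 2 4, ENNReal.ofReal (ℓ (‖u‖ * r)) ∂μ :=
        mul_le_mul_right hsmall _
    _ ≤ ∫⁻ h in coneAnnulus η θ (r * 2) (r * 4), ENNReal.ofReal (ℓ ‖h‖ * ‖h‖ ^ p) ∂μ :=
        ofReal_mul_setLIntegral_le_setLIntegral_coneAnnulus μ hℓ η θ zero_lt_two hp hr0
    _ ≤ _ := lintegral_mono_set (coneAnnulus_mono (by linarith) (by linarith [hr.2]))

end ConeAnnulus

theorem stmt_9_general (d : ℕ) (α : ℝ) (hα : α ∈ Set.Ioo (0:ℝ) 2)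
    (ℓ : ℝ → ℝ) (hmeas : Measurable ℓ)
    (hslow : ∀ lam : ℝ, 0 < lam →
      Tendsto (fun r => ℓ (lam * r) / ℓ r) (𝓝[>] (0:ℝ)) (𝓝 1))
    (hbdd : ∀ a b : ℝ, 0 < a → b < 2 → ∃ m M : ℝ, 0 < m ∧
      ∀ t ∈ Set.Icc a b, m ≤ ℓ t ∧ ℓ t ≤ M)
    (η : EuclideanSpace ℝ (Fin d)) (hη : ‖η‖ = 1)
    (θ : ℝ) (hθ : θ ∈ Set.Ioc (0:ℝ) (Real.pi / 2)) :
    ∃ c : ℝ, 0 < c ∧ ∀ r ∈ Set.Ioo (0:ℝ) (1/4),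
      c * (ℓ r / r ^ α) ≤
        ∫ h in {h : EuclideanSpace ℝ (Fin d) |
            2 * r ≤ ‖h‖ ∧ ‖h‖ ≤ 1 ∧ Real.cos θ * ‖h‖ ≤ |(inner ℝ h η : ℝ)|},
          ℓ ‖h‖ * ‖h‖ ^ (-(d:ℝ) - α) := by
  obtain ⟨hα0, -⟩ := hα
  have hθ1 : Real.cos θ < 1 := by
    simpa using Real.cos_lt_cos_of_nonneg_of_le_pi le_rfl
      (hθ.2.trans (by linarith [Real.pi_pos])) hθ.1
  have hp : -(d:ℝ) - α ≤ 0 := by linarith [d.cast_nonneg (α := ℝ)]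
  have hreal : ∀ r ∈ Ioo (0:ℝ) (1 / 4), ∀ x : ℝ, ENNReal.ofReal x ≤
      ∫⁻ h in coneAnnulus η θ (2 * r) 1, ENNReal.ofReal (ℓ ‖h‖ * ‖h‖ ^ (-(d:ℝ) - α)) →
      x ≤ ∫ h in coneAnnulus η θ (2 * r) 1, ℓ ‖h‖ * ‖h‖ ^ (-(d:ℝ) - α) := fun r hr _ hx =>
    have ⟨_, _, hm, hℓ⟩ := hbdd (2 * r) 1 (by linarith [hr.1]) (by norm_num)
    le_setIntegral_coneAnnulus_of_ofReal_le volume hmeas hp (by linarith [hr.1]) hm hℓ hx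
  obtain ⟨c, hc, hsmall⟩ := SlowlyVaryingAtZero.exists_eventually_le_setLIntegral_coneAnnulus
    volume hslow hmeas hη hθ1 hα0.le
  obtain ⟨m₁, _, hm₁, hℓ₁⟩ := hbdd (1 / 2) 1 (by norm_num) (by norm_num)
  obtain ⟨m, -, hm, hlarge⟩ := ENNReal.lt_iff_exists_real_btwn.1 <|
    setLIntegral_coneAnnulus_pos volume (F := fun t => ℓ t * t ^ (-(d:ℝ) - α)) (by fun_prop) hη
      hθ1 (by norm_num) one_half_lt_one fun t ht =>
        mul_pos (hm₁.trans_le (hℓ₁ t ht).1) (Real.rpow_pos_of_pos (by linarith [ht.1]) _)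
  refine exists_pos_mul_le_of_eventually_nhdsGT hc ?_ (ENNReal.ofReal_pos.1 hm) ?_ ?_
  · rw [finrank_euclideanSpace_fin] at hsmall
    filter_upwards [hsmall, Ioo_mem_nhdsGT (by norm_num : (0:ℝ) < 1 / 4)] with r hr hr'
    exact hreal r hr' _ hr
  · exact fun r hr => hreal r hr m <| hlarge.le.trans <|
      lintegral_mono_set (coneAnnulus_mono (by linarith [hr.2]) le_rfl)
  · intro a ha
    obtain ⟨m, M, hm, hℓ⟩ := hbdd a (1 / 4) ha (by norm_num)
    exact ⟨M / a ^ α, fun r hr => div_le_div₀ (hm.le.trans ((hℓ r hr).1.trans (hℓ r hr).2))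
      (hℓ r hr).2 (by positivity) (Real.rpow_le_rpow ha.le hr.1 hα0.le)⟩

/-- Cone lower bound: there is `c > 0` such that for every `r ∈ (0,1/4)`,
`∫_{2r ≤ |h| ≤ 1, |⟨h,η⟩| ≥ cos θ |h|} ℓ(|h|) |h|^{-d-α} dh ≥ c ℓ(r)/r^α`. -/
theorem stmt_9 (d : ℕ) (hd : 1 ≤ d) (α : ℝ) (hα : α ∈ Set.Ioo (0:ℝ) 2)
    (ℓ : ℝ → ℝ) (hmeas : Measurable ℓ)
    (hpos : ∀ t ∈ Set.Ioo (0:ℝ) 2, 0 < ℓ t)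
    (hslow : ∀ lam : ℝ, 0 < lam →
      Tendsto (fun r => ℓ (lam * r) / ℓ r) (𝓝[>] (0:ℝ)) (𝓝 1))
    (hbdd : ∀ a b : ℝ, 0 < a → b < 2 → ∃ m M : ℝ, 0 < m ∧
      ∀ t ∈ Set.Icc a b, m ≤ ℓ t ∧ ℓ t ≤ M)
    (η : EuclideanSpace ℝ (Fin d)) (hη : ‖η‖ = 1)
    (θ : ℝ) (hθ : θ ∈ Set.Ioc (0:ℝ) (Real.pi / 2)) :
    ∃ c : ℝ, 0 < c ∧ ∀ r ∈ Set.Ioo (0:ℝ) (1/4),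
      c * (ℓ r / r ^ α) ≤
        ∫ h in {h : EuclideanSpace ℝ (Fin d) |
            2 * r ≤ ‖h‖ ∧ ‖h‖ ≤ 1 ∧ Real.cos θ * ‖h‖ ≤ |(inner ℝ h η : ℝ)|},
          ℓ ‖h‖ * ‖h‖ ^ (-(d:ℝ) - α) :=
  stmt_9_general d α hα ℓ hmeas hslow hbdd η hη θ hθ
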